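/- arXiv:0810.3794 — 2 statements merged into one kernel-verified Lean document; each statement's English description precedes it below -/
import Mathlib

section
/- Let X be a proper CAT(0) space, γ : J → X a geodesic with closed image, and (x_i) ⊂ X a sequence converging to a boundary point ξ ∈ ∂X (meaning the functions d(x_i,·) − d(x_i, y) converge locally uniformly to a Busemann function b_ξ). Then, after passing to a subsequence, the nearest-point projections π_{γ(J)}(x_i) converge to a point in the projection set π_{γ(J)}(ξ). -/
open Metric Set Filter Topology

section Preamble

variable {X : Type*} [MetricSpace X]

/-- `γ` is a unit-speed geodesic on the parameter set `J`. -/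
def IsGeodesicOn (γ : ℝ → X) (J : Set ℝ) : Prop :=
  ∀ s ∈ J, ∀ t ∈ J, dist (γ s) (γ t) = |s - t|

/-- `X` is a CAT(0) space: geodesic, and the CN (Bruhat–Tits) comparison inequality holds. -/
structure IsCAT0 (X : Type*) [MetricSpace X] : Prop where
  geodesic : ∀ x y : X, ∃ γ : ℝ → X,
    IsGeodesicOn γ (Set.Icc 0 (dist x y)) ∧ γ 0 = x ∧ γ (dist x y) = y
  cn : ∀ x y z m : X, dist y m = dist y z / 2 → dist z m = dist y z / 2 →
    dist x m ^ 2 ≤ (dist x y ^ 2 + dist x z ^ 2) / 2 - dist y z ^ 2 / 4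

/-- The set of nearest points of `x` in `C`. -/
def projSet (C : Set X) (x : X) : Set X := {p ∈ C | dist x p = Metric.infDist x C}

/-- A geodesic is `B`-contracting if nearest-point projections of closed balls disjoint
from it have diameter at most `B`. -/
def IsContracting (γ : ℝ → X) (J : Set ℝ) (B : ℝ) : Prop :=
  ∀ c : X, ∀ r : ℝ, Metric.closedBall c r ∩ γ '' J = ∅ →
    Metric.diam (⋃ x ∈ Metric.closedBall c r, projSet (γ '' J) x) ≤ B

/-- Geodesically convex subset. -/
def GeodConvex (C : Set X) : Prop :=
  ∀ x ∈ C, ∀ y ∈ C, ∀ γ : ℝ → X, IsGeodesicOn γ (Set.Icc 0 (dist x y)) →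
    γ 0 = x → γ (dist x y) = y → ∀ t ∈ Set.Icc 0 (dist x y), γ t ∈ C

/-- The normalized distance function `z ↦ d(x,z) - d(x,y)` as a continuous map. -/
noncomputable def busFun (y x : X) : C(X, ℝ) :=
  ⟨fun z => dist x z - dist x y, (continuous_const.dist continuous_id).sub continuous_const⟩

/-- The visual boundary (with basepoint `y`), realized inside `C(X,ℝ)` as the set of
limits at infinity of normalized distance functions. -/
def visualBoundary (y : X) : Set C(X, ℝ) :=
  closure (Set.range (busFun y)) \ Set.range (busFun y)

/-- The induced action of an isometry on the compactification `X ∪ ∂X ⊆ C(X,ℝ)`. -/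
noncomputable def bAct (y : X) (g : X ≃ᵢ X) (f : C(X, ℝ)) : C(X, ℝ) :=
  ⟨fun z => f (g.symm z) - f (g.symm y),
    (f.continuous.comp g.symm.continuous).sub continuous_const⟩

/-- `γ` tends to the boundary point `ξ` in forward time. -/
def raysTo (y : X) (γ : ℝ → X) (ξ : C(X, ℝ)) : Prop :=
  Filter.Tendsto (fun t => busFun y (γ t)) Filter.atTop (nhds ξ)

/-- `γ` tends to the boundary point `ξ` in backward time. -/
def raysToNeg (y : X) (γ : ℝ → X) (ξ : C(X, ℝ)) : Prop :=
  Filter.Tendsto (fun t => busFun y (γ t)) Filter.atBot (nhds ξ)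

/-- `γ` is an oriented axis for `g`, with translation length `τ` equal to the minimum
of the displacement function of `g`. -/
def IsAxis (g : X ≃ᵢ X) (γ : ℝ → X) (τ : ℝ) : Prop :=
  IsGeodesicOn γ Set.univ ∧ 0 < τ ∧ (∀ t, g (γ t) = γ (t + τ)) ∧
  ∀ x : X, τ ≤ dist x (g x)

/-- `γ` bounds a flat half-plane: an isometrically embedded Euclidean half-plane. -/
def BoundsFlatHalfPlane (γ : ℝ → X) : Prop :=
  ∃ F : ℝ × ℝ → X,
    (∀ p q : ℝ × ℝ, 0 ≤ p.2 → 0 ≤ q.2 →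
      dist (F p) (F q) = Real.sqrt ((p.1 - q.1) ^ 2 + (p.2 - q.2) ^ 2)) ∧
    ∀ t, F (t, 0) = γ t

/-- A rank-one isometry: an axial isometry with an axis bounding no flat half-plane. -/
def IsRankOne (g : X ≃ᵢ X) : Prop :=
  ∃ γ τ, IsAxis g γ τ ∧ ¬ BoundsFlatHalfPlane γ

/-- `g` acts with north-south dynamics on the visual boundary. -/
def NorthSouthDynamics (y : X) (g : X ≃ᵢ X) : Prop :=
  ∃ a ∈ visualBoundary y, ∃ b ∈ visualBoundary y, a ≠ b ∧
    bAct y g a = a ∧ bAct y g b = b ∧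
    ∀ U ∈ nhdsWithin a (visualBoundary y), ∀ V ∈ nhdsWithin b (visualBoundary y),
      ∃ k : ℕ, 0 < k ∧ (∀ ξ ∈ visualBoundary y, ξ ∉ V → bAct y (g ^ k) ξ ∈ U) ∧
        (∀ ξ ∈ visualBoundary y, ξ ∉ U → bAct y (g⁻¹ ^ k) ξ ∈ V)

/-- The limit set of a subgroup `G` of the isometry group. -/
def limitSet (G : Subgroup (X ≃ᵢ X)) (y : X) : Set C(X, ℝ) :=
  visualBoundary y ∩ closure ((fun h : X ≃ᵢ X => busFun y (h y)) '' (G : Set (X ≃ᵢ X)))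

/-- `G` is non-elementary: its limit set has at least three points and `G` fixes no
point of the visual boundary. -/
def NonElementary (G : Subgroup (X ≃ᵢ X)) (y : X) : Prop :=
  (∃ a ∈ limitSet G y, ∃ b ∈ limitSet G y, ∃ c ∈ limitSet G y,
    a ≠ b ∧ a ≠ c ∧ b ≠ c) ∧
  ¬ ∃ ξ ∈ visualBoundary y, ∀ g ∈ G, bAct y g ξ = ξ

end Preamble


open scoped Classical in
/-- The projection of a boundary point `ξ` to the closed set `S = γ(J)`, as a subset of the
compactification `X ∪ ∂X ⊆ C(X,ℝ)`: the closure of the set of minima of `ξ` on `S` if minima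
exist, and otherwise the boundary points of `S` reached along sequences in `S` on which `ξ`
tends to its infimum. -/
noncomputable def projSetXi {X : Type*} [MetricSpace X] (y : X) (S : Set X)
    (ξ : C(X, ℝ)) : Set C(X, ℝ) :=
  if ∃ z ∈ S, ∀ q ∈ S, ξ z ≤ ξ q then
    closure (busFun y '' {z ∈ S | ∀ q ∈ S, ξ z ≤ ξ q})
  else
    {w ∈ closure (busFun y '' S) \ busFun y '' S |
      ∃ s : ℕ → X, (∀ n, s n ∈ S) ∧
        Filter.Tendsto (fun n => busFun y (s n)) Filter.atTop (nhds w) ∧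
        ∀ q ∈ S, ∀ ε > (0:ℝ), ∀ᶠ n in Filter.atTop, ξ (s n) < ξ q + ε}


/-!
Write `p i = γ (t i)` and pass to a subsequence along which `t i` converges in `[-∞, ∞]`.
If the limit is finite, the `p i` converge in `X` to a point of the closed set `γ(J)`, which
minimises `ξ` on `γ(J)` as a limit of minimisers of `d(x i, ·)`. If `t i → +∞` (the case `-∞`
is symmetric), the normalised distance functions of `γ (t i)` converge to the Busemann function
of the geodesic, which is not the normalised distance function of any point. Since distance
functions are convex along geodesics of a CAT(0) space, `d(x i, γ ·)` does not increase on the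
part of `J` before the projection parameter `t i`; in the limit `ξ ∘ γ` is antitone. Hence either
the `γ (t i)` are eventually minima of `ξ` on `γ(J)`, or `ξ` tends to its infimum along them.
-/

lemma ContinuousOn.le_max_of_midpoint_le {f : ℝ → ℝ} {a b u : ℝ}
    (hf : ContinuousOn f (Icc a b))
    (hmid : ∀ r₁ ∈ Icc a b, ∀ r₂ ∈ Icc a b, f ((r₁ + r₂) / 2) ≤ (f r₁ + f r₂) / 2)
    (hu : u ∈ Icc a b) : f u ≤ max (f a) (f b) := by
  obtain ⟨c₀, hc₀, hmax⟩ := isCompact_Icc.exists_isMaxOn ⟨u, hu⟩ hf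
  have hmax' : ∀ r ∈ Icc a b, f r ≤ f c₀ := fun r hr => hmax hr
  -- the leftmost maximiser `c` cannot be interior, by midpoint convexity at `c ± δ`
  set M := Icc a b ∩ f ⁻¹' {f c₀}
  have hMc : IsCompact M := isCompact_Icc.of_isClosed_subset
    (hf.preimage_isClosed_of_isClosed isClosed_Icc isClosed_singleton) inter_subset_left
  have hcM : sInf M ∈ M := hMc.sInf_mem ⟨c₀, hc₀, rfl⟩
  set c := sInf M
  have hfc : f c = f c₀ := hcM.2
  suffices c = a ∨ c = b by
    rcases this with h | h <;> rw [← h, hfc] <;> simp [hmax' u hu]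
  by_contra! hne
  obtain ⟨hac, hcb⟩ := hcM.1
  set δ := min (c - a) (b - c)
  have hδ : 0 < δ := lt_min (by grind) (by grind)
  have hl : c - δ ∈ Icc a b := ⟨by grind, by grind⟩
  have hr : c + δ ∈ Icc a b := ⟨by grind, by grind⟩
  have hlt : f (c - δ) < f c := by
    refine hfc ▸ (hmax' _ hl).lt_of_ne fun h => ?_
    have := csInf_le hMc.bddBelow ⟨hl, h⟩
    linarith
  have hmid' := hmid _ hl _ hr
  rw [show (c - δ + (c + δ)) / 2 = c by ring] at hmid'
  linarith [hmax' _ hr]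

lemma ContinuousMap.tendsto_of_equicontinuous_of_tendsto_pi {ι X α : Type*}
    [TopologicalSpace X] [UniformSpace α] {l : Filter ι} {F : ι → C(X, α)} {f : C(X, α)}
    (hF : Equicontinuous fun i => ⇑(F i)) (h : Tendsto (fun i => ⇑(F i)) l (𝓝 ⇑f)) :
    Tendsto F l (𝓝 f) := by
  rw [isUniformEmbedding_toUniformOnFunIsCompact.isInducing.tendsto_nhds_iff]
  exact (EquicontinuousOn.tendsto_uniformOnFun_iff_pi (fun K hK => hK)
    (eq_univ_of_forall fun x => ⟨{x}, isCompact_singleton, rfl⟩)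
    (fun K _ => hF.equicontinuousOn K) l f).2 h

lemma ContinuousMap.exists_tendsto_of_lipschitzWith {ι X α : Type*}
    [PseudoEMetricSpace X] [PseudoEMetricSpace α] {l : Filter ι} [l.NeBot] {F : ι → C(X, α)}
    {K : NNReal} (hF : ∀ i, LipschitzWith K (F i)) {g : X → α}
    (hg : ∀ z, Tendsto (fun i => F i z) l (𝓝 (g z))) :
    ∃ w : C(X, α), Tendsto F l (𝓝 w) := by
  have hequi := LipschitzWith.uniformEquicontinuous (fun i => ⇑(F i)) K hF
  have hlim : Tendsto (fun i => ⇑(F i)) l (𝓝 g) := tendsto_pi_nhds.2 hg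
  exact ⟨⟨g, (hlim.uniformContinuous_of_uniformEquicontinuous hequi).continuous⟩,
    ContinuousMap.tendsto_of_equicontinuous_of_tendsto_pi hequi.equicontinuous hlim⟩

lemma exists_subseq_tendsto_or_atTop_or_atBot (t : ℕ → ℝ) :
    ∃ φ : ℕ → ℕ, StrictMono φ ∧ ((∃ a, Tendsto (t ∘ φ) atTop (𝓝 a)) ∨
      Tendsto (t ∘ φ) atTop atTop ∨ Tendsto (t ∘ φ) atTop atBot) := by
  obtain ⟨l, φ, hφ, hl⟩ := CompactSpace.tendsto_subseq (fun n => (t n : EReal))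
  refine ⟨φ, hφ, ?_⟩
  induction l using EReal.rec with
  | bot =>
    refine .inr (.inr (tendsto_atBot.2 fun b => ?_))
    filter_upwards [EReal.tendsto_nhds_bot_iff_real.1 hl b] with n hn
    exact (EReal.coe_lt_coe_iff.1 hn).le
  | coe a => exact .inl ⟨a, EReal.tendsto_coe.1 hl⟩
  | top =>
    refine .inr (.inl (tendsto_atTop.2 fun b => ?_))
    filter_upwards [EReal.tendsto_nhds_top_iff_real.1 hl b] with n hn
    exact (EReal.coe_lt_coe_iff.1 hn).le

section

variable {X : Type*} [MetricSpace X]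

lemma IsGeodesicOn.isometry_domRestrict {γ : ℝ → X} {J : Set ℝ} (hγ : IsGeodesicOn γ J) :
    Isometry (J.domRestrict γ) :=
  Isometry.of_dist_eq fun s t => (hγ s s.2 t t.2).trans (Real.dist_eq s t).symm

lemma IsGeodesicOn.continuousOn {γ : ℝ → X} {J : Set ℝ} (hγ : IsGeodesicOn γ J) :
    ContinuousOn γ J :=
  continuousOn_iff_continuous_domRestrict.2 hγ.isometry_domRestrict.continuous

lemma IsGeodesicOn.cauchySeq_comp {γ : ℝ → X} {J : Set ℝ} (hγ : IsGeodesicOn γ J)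
    {t : ℕ → ℝ} (ht : ∀ n, t n ∈ J) (hcauchy : CauchySeq t) : CauchySeq (fun n => γ (t n)) := by
  have hdist : ∀ m n, dist (γ (t m)) (γ (t n)) = dist (t m) (t n) := fun m n =>
    (hγ _ (ht m) _ (ht n)).trans (Real.dist_eq _ _).symm
  rw [Metric.cauchySeq_iff] at hcauchy ⊢
  simpa only [hdist] using hcauchy

namespace IsCAT0

variable (hX : IsCAT0 X)
include hX

lemma exists_midpoint (p q : X) :
    ∃ m, dist p m = dist p q / 2 ∧ dist q m = dist p q / 2 := by
  obtain ⟨σ, hσ, hσ0, hσ1⟩ := hX.geodesic p q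
  have hD := dist_nonneg (x := p) (y := q)
  have hmid : dist p q / 2 ∈ Icc 0 (dist p q) := ⟨by linarith, by linarith⟩
  have hp := hσ 0 ⟨le_rfl, hD⟩ _ hmid
  have hq := hσ _ ⟨hD, le_rfl⟩ _ hmid
  rw [hσ0] at hp
  rw [hσ1] at hq
  exact ⟨σ (dist p q / 2), by rw [hp]; grind, by rw [hq]; grind⟩

lemma dist_midpoint_lt {a p q m : X} (hpm : dist p m = dist p q / 2)
    (hqm : dist q m = dist p q / 2) (hne : p ≠ q) (h : dist a q = dist a p) :
    dist a m < dist a p := by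
  have hcn := hX.cn a p q m hpm hqm
  rw [h] at hcn
  exact lt_of_pow_lt_pow_left₀ 2 dist_nonneg (by nlinarith [dist_pos.2 hne])

lemma eq_of_dist_add_eq {a b p q : X} (hsum : dist a p + dist p b = dist a b)
    (ha : dist a q = dist a p) (hb : dist q b = dist p b) : p = q := by
  by_contra hne
  obtain ⟨m, hpm, hqm⟩ := hX.exists_midpoint p q
  have hma := hX.dist_midpoint_lt hpm hqm hne ha
  have hmb := hX.dist_midpoint_lt (a := b) hpm hqm hne (by rw [dist_comm, hb, dist_comm])
  linarith [dist_triangle a m b, dist_comm m b, dist_comm p b]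

lemma dist_midpoint_le {σ : ℝ → X} {J : Set ℝ} (hσ : IsGeodesicOn σ J) (x : X)
    {r₁ r₂ : ℝ} (h₁ : r₁ ∈ J) (h₂ : r₂ ∈ J) (hm : (r₁ + r₂) / 2 ∈ J) :
    dist x (σ ((r₁ + r₂) / 2)) ≤ (dist x (σ r₁) + dist x (σ r₂)) / 2 := by
  have hd : dist (σ r₁) (σ r₂) = |r₁ - r₂| := hσ _ h₁ _ h₂
  have hcn := hX.cn x (σ r₁) (σ r₂) (σ ((r₁ + r₂) / 2))
    (by rw [hσ _ h₁ _ hm, hd, ← abs_two, ← abs_div]; ring_nf)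
    (by rw [hσ _ h₂ _ hm, hd, abs_sub_comm, ← abs_two, ← abs_div]; ring_nf)
  -- CN with `|d(x,σ r₁) - d(x,σ r₂)| ≤ d(σ r₁, σ r₂)` bounds the square of the left side by
  -- the square of the mean
  have htri : |dist x (σ r₁) - dist x (σ r₂)| ≤ dist (σ r₁) (σ r₂) := by
    simpa only [dist_comm x] using abs_dist_sub_le (σ r₁) (σ r₂) x
  have hsq := sq_le_sq' (abs_le.1 htri).1 (abs_le.1 htri).2
  refine (pow_le_pow_iff_left₀ dist_nonneg (by positivity) two_ne_zero).1 ?_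
  nlinarith

lemma dist_le_max_of_isGeodesicOn_Icc {σ : ℝ → X} {a b u : ℝ}
    (hσ : IsGeodesicOn σ (Icc a b)) (x : X) (hu : u ∈ Icc a b) :
    dist x (σ u) ≤ max (dist x (σ a)) (dist x (σ b)) :=
  ((continuous_const.dist continuous_id).comp_continuousOn hσ.continuousOn).le_max_of_midpoint_le
    (fun _ h₁ _ h₂ => hX.dist_midpoint_le hσ x h₁ h₂
      ⟨by linarith [h₁.1, h₂.1], by linarith [h₁.2, h₂.2]⟩) hu

lemma dist_le_max_of_isGeodesicOn {γ : ℝ → X} {J : Set ℝ} (hγ : IsGeodesicOn γ J) (x : X)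
    {s u v : ℝ} (hs : s ∈ J) (hu : u ∈ J) (hv : v ∈ J) (hsu : s ≤ u) (huv : u ≤ v) :
    dist x (γ u) ≤ max (dist x (γ s)) (dist x (γ v)) := by
  obtain ⟨σ, hσ, hσ0, hσ1⟩ := hX.geodesic (γ s) (γ v)
  have hD : dist (γ s) (γ v) = v - s := by
    rw [hγ s hs v hv, abs_sub_comm, abs_of_nonneg (by linarith)]
  have hmem : u - s ∈ Icc 0 (dist (γ s) (γ v)) := ⟨by linarith, by linarith⟩
  have h₀ := hσ 0 ⟨le_rfl, dist_nonneg⟩ _ hmem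
  have h₁ := hσ _ hmem _ ⟨dist_nonneg, le_rfl⟩
  rw [hσ0] at h₀
  rw [hσ1] at h₁
  replace h₀ : dist (γ s) (σ (u - s)) = u - s := by grind
  replace h₁ : dist (σ (u - s)) (γ v) = v - u := by grind
  -- `J` need not contain `[s, v]`; uniqueness of geodesics puts `γ u` on `σ` anyway
  have hσu : σ (u - s) = γ u :=
    hX.eq_of_dist_add_eq (a := γ s) (b := γ v) (by rw [h₀, h₁, hD]; ring)
      (by rw [h₀, hγ s hs u hu]; grind) (by rw [h₁, hγ u hu v hv]; grind)
  simpa only [hσ0, hσ1, hσu] using hX.dist_le_max_of_isGeodesicOn_Icc hσ x hmem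

end IsCAT0

@[simp]
lemma busFun_apply (y a z : X) : busFun y a z = dist a z - dist a y := rfl

lemma lipschitzWith_busFun (y a : X) : LipschitzWith 1 (busFun y a) :=
  LipschitzWith.of_le_add fun z z' => by
    simp only [busFun_apply]
    linarith [dist_triangle a z' z, dist_comm z z']

lemma continuous_busFun (y : X) : Continuous (busFun y) :=
  (ContinuousMap.curry ⟨fun q : X × X => dist q.1 q.2 - dist q.1 y, by fun_prop⟩).continuous

lemma dist_le_of_mem_projSet {C : Set X} {x p q : X} (hp : p ∈ projSet C x) (hq : q ∈ C) :
    dist x p ≤ dist x q :=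
  hp.2 ▸ infDist_le_dist_of_mem hq

lemma projSetXi_of_exists_isMin (y : X) {S : Set X} {ξ : C(X, ℝ)}
    (h : ∃ z ∈ S, ∀ q ∈ S, ξ z ≤ ξ q) :
    projSetXi y S ξ = closure (busFun y '' {z ∈ S | ∀ q ∈ S, ξ z ≤ ξ q}) := by
  rw [projSetXi, if_pos h]

lemma projSetXi_of_not_exists_isMin (y : X) {S : Set X} {ξ : C(X, ℝ)}
    (h : ¬ ∃ z ∈ S, ∀ q ∈ S, ξ z ≤ ξ q) :
    projSetXi y S ξ = {w ∈ closure (busFun y '' S) \ busFun y '' S |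
      ∃ s : ℕ → X, (∀ n, s n ∈ S) ∧ Tendsto (fun n => busFun y (s n)) atTop (𝓝 w) ∧
        ∀ q ∈ S, ∀ ε > (0:ℝ), ∀ᶠ n in atTop, ξ (s n) < ξ q + ε} := by
  rw [projSetXi, if_neg h]

end

lemma image_comp_neg_preimage_neg {X : Type*} (γ : ℝ → X) (J : Set ℝ) :
    (fun r => γ (-r)) '' (Neg.neg ⁻¹' J) = γ '' J := by
  rw [show (fun r => γ (-r)) = γ ∘ Neg.neg from rfl, image_comp,
    image_preimage_eq J neg_surjective]

section

variable {X : Type*} [MetricSpace X] {γ : ℝ → X} {J : Set ℝ} {t : ℕ → ℝ}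

lemma IsGeodesicOn.comp_neg (hγ : IsGeodesicOn γ J) :
    IsGeodesicOn (fun r => γ (-r)) (Neg.neg ⁻¹' J) := fun s hs r hr => by
  rw [hγ _ hs _ hr, ← abs_neg]
  ring_nf

lemma IsGeodesicOn.tendsto_dist_sub_atTop (hγ : IsGeodesicOn γ J) (ht : ∀ n, t n ∈ J)
    (htop : Tendsto t atTop atTop) (z : X) :
    Tendsto (fun n => dist (γ (t n)) z - t n) atTop (𝓝 (⨅ r : J, dist (γ r) z - r)) := by
  have hanti : Antitone fun r : J => dist (γ r) z - r := fun r r' hrr' => by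
    have hd := hγ r' r'.2 r r.2
    rw [abs_of_nonneg (sub_nonneg.2 (Subtype.coe_le_coe.2 hrr'))] at hd
    show dist (γ r') z - r' ≤ dist (γ r) z - r
    linarith [dist_triangle (γ r') (γ r) z]
  have hbdd : BddBelow (range fun r : J => dist (γ r) z - r) := by
    refine ⟨-t 0 - dist (γ (t 0)) z, ?_⟩
    rintro _ ⟨r, rfl⟩
    have hd := hγ r r.2 (t 0) (ht 0)
    linarith [dist_triangle (γ r) z (γ (t 0)), dist_comm z (γ (t 0)), le_abs_self (r - t 0)]
  have : Nonempty J := ⟨⟨t 0, ht 0⟩⟩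
  exact (tendsto_atTop_ciInf hanti hbdd).comp (f := fun n => (⟨t n, ht n⟩ : J))
    (tendsto_atTop.2 fun r => tendsto_atTop.1 htop r)

lemma IsGeodesicOn.exists_tendsto_busFun_atTop (hγ : IsGeodesicOn γ J) (y : X)
    (ht : ∀ n, t n ∈ J) (htop : Tendsto t atTop atTop) :
    ∃ w : C(X, ℝ), Tendsto (fun n => busFun y (γ (t n))) atTop (𝓝 w) :=
  ContinuousMap.exists_tendsto_of_lipschitzWith (fun _ => lipschitzWith_busFun y _) fun z =>
    ((hγ.tendsto_dist_sub_atTop ht htop z).sub (hγ.tendsto_dist_sub_atTop ht htop y)).congr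
      fun _ => sub_sub_sub_cancel_right _ _ _

lemma IsGeodesicOn.busFun_ne_of_tendsto_atTop (hγ : IsGeodesicOn γ J) (y : X)
    (ht : ∀ n, t n ∈ J) (htop : Tendsto t atTop atTop) {w : C(X, ℝ)}
    (hw : Tendsto (fun n => busFun y (γ (t n))) atTop (𝓝 w)) (q : X) : busFun y q ≠ w := by
  rintro rfl
  -- along the geodesic the limit decays like `-t`, while `busFun y q ≥ -dist q y`
  have hdecay : ∀ m, t 0 ≤ t m → busFun y q (γ (t m)) ≤ t 0 + dist (γ (t 0)) y - t m := by
    intro m hm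
    refine le_of_tendsto (((continuous_eval_const _).tendsto _).comp hw) ?_
    filter_upwards [htop.eventually_ge_atTop (t m)] with n hn
    have hm' := hγ _ (ht n) _ (ht m)
    have h0 := hγ _ (ht n) _ (ht 0)
    rw [abs_of_nonneg (by linarith)] at hm' h0
    simp only [Function.comp_apply, busFun_apply]
    linarith [dist_triangle (γ (t n)) y (γ (t 0)), dist_comm y (γ (t 0))]
  obtain ⟨m, hm⟩ := (htop.eventually_ge_atTop (t 0 + dist (γ (t 0)) y + dist q y + 1)).exists
  have hm0 := hdecay m <| by
    linarith [dist_nonneg (x := γ (t 0)) (y := y), dist_nonneg (x := q) (y := y)]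
  simp only [busFun_apply] at hm0
  linarith [dist_nonneg (x := q) (y := γ (t m))]

variable {x : ℕ → X} {y : X} {ξ : C(X, ℝ)}

lemma forall_le_of_tendsto_projSet [LocallyCompactSpace X] {S : Set X} {p : ℕ → X} {q : X}
    (hconv : Tendsto (fun n => busFun y (x n)) atTop (𝓝 ξ))
    (hp : ∀ n, p n ∈ projSet S (x n)) (hq : Tendsto p atTop (𝓝 q)) : ∀ z ∈ S, ξ q ≤ ξ z :=
  fun z hz => le_of_tendsto_of_tendsto
    ((continuous_eval.tendsto (ξ, q)).comp (hconv.prodMk_nhds hq))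
    (((continuous_eval_const z).tendsto ξ).comp hconv) (Eventually.of_forall fun n => by
      simp only [Function.comp_apply, busFun_apply]
      linarith [dist_le_of_mem_projSet (hp n) hz])

lemma busFun_mem_projSetXi {S : Set X} {q : X} (hq : q ∈ S) (hmin : ∀ z ∈ S, ξ q ≤ ξ z) :
    busFun y q ∈ projSetXi y S ξ := by
  rw [projSetXi_of_exists_isMin y ⟨q, hq, hmin⟩]
  exact subset_closure (mem_image_of_mem _ ⟨hq, hmin⟩)

namespace IsCAT0

variable (hX : IsCAT0 X)
include hX

lemma antitoneOn_comp_of_tendsto_projSet (hγ : IsGeodesicOn γ J)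
    (hconv : Tendsto (fun n => busFun y (x n)) atTop (𝓝 ξ)) (ht : ∀ n, t n ∈ J)
    (hp : ∀ n, γ (t n) ∈ projSet (γ '' J) (x n)) (htop : Tendsto t atTop atTop) :
    AntitoneOn (fun r => ξ (γ r)) J := fun r hr u hu hru =>
  le_of_tendsto_of_tendsto (((continuous_eval_const _).tendsto ξ).comp hconv)
    (((continuous_eval_const _).tendsto ξ).comp hconv) <| by
    filter_upwards [htop.eventually_ge_atTop u] with n hn
    have hmax := hX.dist_le_max_of_isGeodesicOn hγ (x n) hr hu (ht n) hru hn
    rw [max_eq_left (dist_le_of_mem_projSet (hp n) (mem_image_of_mem γ hr))] at hmax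
    simp only [Function.comp_apply, busFun_apply]
    linarith

lemma exists_mem_projSetXi_of_tendsto_atTop (hγ : IsGeodesicOn γ J)
    (hconv : Tendsto (fun n => busFun y (x n)) atTop (𝓝 ξ)) (ht : ∀ n, t n ∈ J)
    (hp : ∀ n, γ (t n) ∈ projSet (γ '' J) (x n)) (htop : Tendsto t atTop atTop) :
    ∃ w ∈ projSetXi y (γ '' J) ξ, Tendsto (fun n => busFun y (γ (t n))) atTop (𝓝 w) := by
  obtain ⟨w, hw⟩ := hγ.exists_tendsto_busFun_atTop y ht htop
  have hanti := hX.antitoneOn_comp_of_tendsto_projSet hγ hconv ht hp htop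
  refine ⟨w, ?_, hw⟩
  by_cases hmin : ∃ z ∈ γ '' J, ∀ q ∈ γ '' J, ξ z ≤ ξ q
  · rw [projSetXi_of_exists_isMin y hmin]
    obtain ⟨_, ⟨r₀, hr₀, rfl⟩, hr₀min⟩ := hmin
    refine mem_closure_of_tendsto hw ?_
    filter_upwards [htop.eventually_ge_atTop r₀] with n hn
    exact mem_image_of_mem _
      ⟨mem_image_of_mem γ (ht n), fun q hq => (hanti hr₀ (ht n) hn).trans (hr₀min q hq)⟩
  · rw [projSetXi_of_not_exists_isMin y hmin]
    refine ⟨⟨mem_closure_of_tendsto hw (Eventually.of_forall fun n =>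
      mem_image_of_mem _ (mem_image_of_mem γ (ht n))), ?_⟩,
      fun n => γ (t n), fun n => mem_image_of_mem γ (ht n), hw, ?_⟩
    · rintro ⟨q, -, hq⟩
      exact hγ.busFun_ne_of_tendsto_atTop y ht htop hw q hq
    · rintro _ ⟨r, hr, rfl⟩ ε hε
      filter_upwards [htop.eventually_ge_atTop r] with n hn
      linarith [hanti hr (ht n) hn]

lemma exists_mem_projSetXi_of_tendsto_atBot (hγ : IsGeodesicOn γ J)
    (hconv : Tendsto (fun n => busFun y (x n)) atTop (𝓝 ξ)) (ht : ∀ n, t n ∈ J)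
    (hp : ∀ n, γ (t n) ∈ projSet (γ '' J) (x n)) (hbot : Tendsto t atTop atBot) :
    ∃ w ∈ projSetXi y (γ '' J) ξ, Tendsto (fun n => busFun y (γ (t n))) atTop (𝓝 w) := by
  have himage := image_comp_neg_preimage_neg γ J
  simpa only [himage, neg_neg] using hX.exists_mem_projSetXi_of_tendsto_atTop hγ.comp_neg hconv
    (t := fun n => -t n) (by simpa only [mem_preimage, neg_neg] using ht)
    (by simpa only [himage, neg_neg] using hp)
    (tendsto_neg_atBot_atTop.comp hbot)

end IsCAT0

end

theorem stmt_6_general {X : Type*} [MetricSpace X] [ProperSpace X] (hX : IsCAT0 X) (y : X)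
    (γ : ℝ → X) (J : Set ℝ) (hγ : IsGeodesicOn γ J) (hJcl : IsClosed (γ '' J))
    (x : ℕ → X) (ξ : C(X, ℝ))
    (hconv : Filter.Tendsto (fun i => busFun y (x i)) Filter.atTop (nhds ξ))
    (p : ℕ → X) (hp : ∀ i, p i ∈ projSet (γ '' J) (x i)) :
    ∃ φ : ℕ → ℕ, StrictMono φ ∧ ∃ w ∈ projSetXi y (γ '' J) ξ,
      Filter.Tendsto (fun i => busFun y (p (φ i))) Filter.atTop (nhds w) := by
  choose t ht hpt using fun i => (hp i).1
  obtain rfl : p = fun i => γ (t i) := funext fun i => (hpt i).symm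
  obtain ⟨φ, hφ, ⟨a, ha⟩ | htop | hbot⟩ := exists_subseq_tendsto_or_atTop_or_atBot t
  · obtain ⟨q, hq⟩ := cauchySeq_tendsto_of_complete
      (hγ.cauchySeq_comp (fun n => ht (φ n)) ha.cauchySeq)
    have hqS : q ∈ γ '' J :=
      hJcl.mem_of_tendsto hq (Eventually.of_forall fun n => mem_image_of_mem γ (ht (φ n)))
    exact ⟨φ, hφ, busFun y q, busFun_mem_projSetXi hqS
      (forall_le_of_tendsto_projSet (hconv.comp hφ.tendsto_atTop) (fun n => hp (φ n)) hq),
      ((continuous_busFun y).tendsto q).comp hq⟩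
  · exact ⟨φ, hφ, hX.exists_mem_projSetXi_of_tendsto_atTop hγ (hconv.comp hφ.tendsto_atTop)
      (fun n => ht (φ n)) (fun n => hp (φ n)) htop⟩
  · exact ⟨φ, hφ, hX.exists_mem_projSetXi_of_tendsto_atBot hγ (hconv.comp hφ.tendsto_atTop)
      (fun n => ht (φ n)) (fun n => hp (φ n)) hbot⟩

/-- if `x_i → ξ ∈ ∂X` then, after passing to a subsequence, the
nearest-point projections of the `x_i` to a geodesic converge to a point of the
projection set of `ξ`. -/
theorem stmt_6 {X : Type*} [MetricSpace X] [ProperSpace X] (hX : IsCAT0 X) (y : X)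
    (γ : ℝ → X) (J : Set ℝ) (hγ : IsGeodesicOn γ J) (hJcl : IsClosed (γ '' J))
    (x : ℕ → X) (ξ : C(X, ℝ)) (hξ : ξ ∈ visualBoundary y)
    (hconv : Filter.Tendsto (fun i => busFun y (x i)) Filter.atTop (nhds ξ))
    (p : ℕ → X) (hp : ∀ i, p i ∈ projSet (γ '' J) (x i)) :
    ∃ φ : ℕ → ℕ, StrictMono φ ∧ ∃ w ∈ projSetXi y (γ '' J) ξ,
      Filter.Tendsto (fun i => busFun y (p (φ i))) Filter.atTop (nhds w) :=
  stmt_6_general hX y γ J hγ hJcl x ξ hconv p hp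
end

section
/- Let X be a proper CAT(0) space and g an axial isometry of X which acts on the visual boundary ∂X with north-south dynamics. Then g is rank-one, i.e. g has an axis which does not bound a flat half-plane. -/
/-!
If an axis `γ` of `g` bounded a flat half-plane, the boundary would contain three Busemann
points: the two endpoints of `γ`, both fixed by every power of `g`, and the endpoint `ξ` of the
ray that leaves `γ` perpendicularly inside the half-plane. North-south dynamics forces every
boundary point fixed by all powers of `g` to be the attractor or the repeller, so these are the
two endpoints of `γ`. The Busemann functions of the endpoints are strictly monotone along `γ`,
whereas those of `ξ` and of all its `g`-translates are constant on `γ`. Hence the open set of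
boundary points that are not constant on `γ` contains the attractor and the repeller but misses
the whole orbit of `ξ`, which contradicts north-south dynamics.
-/

open Metric Set Filter Topology

theorem ContinuousMap.tendsto_of_equicontinuous {α β ι : Type*} [TopologicalSpace α]
    [UniformSpace β] {ℱ : Filter ι} {F : ι → C(α, β)} {f : C(α, β)}
    (hF : Equicontinuous fun i => ⇑(F i)) (h : ∀ x, Tendsto (fun i => F i x) ℱ (𝓝 (f x))) :
    Tendsto F ℱ (𝓝 f) := by
  rw [ContinuousMap.isUniformEmbedding_toUniformOnFunIsCompact.isInducing.tendsto_nhds_iff]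
  exact (EquicontinuousOn.tendsto_uniformOnFun_iff_pi (fun K hK => hK)
    (sUnion_eq_univ_iff.2 fun x => ⟨{x}, isCompact_singleton, rfl⟩)
    (fun K _ => hF.equicontinuousOn K) ℱ f).2 (tendsto_pi_nhds.2 h)

theorem tendsto_sqrt_sq_add_sq_sub_atTop (u : ℝ) :
    Tendsto (fun s : ℝ => √(u ^ 2 + s ^ 2) - s) atTop (𝓝 0) := by
  refine tendsto_of_tendsto_of_tendsto_of_le_of_le' tendsto_const_nhds
    (tendsto_const_nhds.div_atTop tendsto_id : Tendsto (fun s : ℝ => u ^ 2 / s) atTop (𝓝 0))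
    ?_ ?_
  · filter_upwards [eventually_ge_atTop 0] with s hs
    have : s ≤ √(u ^ 2 + s ^ 2) := (Real.le_sqrt hs (by positivity)).2 (by nlinarith)
    linarith
  · filter_upwards [eventually_gt_atTop 0] with s hs
    have : √(u ^ 2 + s ^ 2) ≤ s + u ^ 2 / s := by
      refine (Real.sqrt_le_left (by positivity)).2 ?_
      have : (s + u ^ 2 / s) ^ 2 = s ^ 2 + 2 * u ^ 2 + (u ^ 2 / s) ^ 2 := by
        field_simp
        ring
      nlinarith [sq_nonneg (u ^ 2 / s), sq_nonneg u]
    linarith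

section Busemann

variable {X : Type*} [MetricSpace X] {ρ : ℝ → X} {J K : Set ℝ}

theorem IsGeodesicOn.mono (hρ : IsGeodesicOn ρ J) (hKJ : K ⊆ J) : IsGeodesicOn ρ K :=
  fun s hs t ht => hρ s (hKJ hs) t (hKJ ht)

theorem IsGeodesicOn.comp_neg_s13 (hρ : IsGeodesicOn ρ univ) :
    IsGeodesicOn (fun s => ρ (-s)) univ := fun s _ t _ => by
  rw [hρ _ trivial _ trivial, ← abs_neg]
  ring_nf

theorem IsGeodesicOn.dist_eq_sub (hρ : IsGeodesicOn ρ J) {s t : ℝ} (hs : s ∈ J) (ht : t ∈ J)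
    (hst : s ≤ t) : dist (ρ t) (ρ s) = t - s := by
  rw [hρ t ht s hs, abs_of_nonneg (sub_nonneg.2 hst)]

theorem IsGeodesicOn.exists_tendsto_dist_sub (hρ : IsGeodesicOn ρ (Ici 0)) (z : X) :
    ∃ l, Tendsto (fun s => dist (ρ s) z - s) atTop (𝓝 l) := by
  let f : ℝ → ℝ := fun s => dist (ρ (max s 0)) z - max s 0
  have hanti : Antitone f := fun s t hst => by
    have := hρ.dist_eq_sub (le_max_right s 0) (le_max_right t 0) (max_le_max_right 0 hst)
    linarith [dist_triangle (ρ (max t 0)) (ρ (max s 0)) z]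
  have hbdd : BddBelow (range f) := by
    refine ⟨-dist (ρ 0) z, ?_⟩
    rintro _ ⟨s, rfl⟩
    have := hρ.dist_eq_sub (mem_Ici.2 le_rfl) (le_max_right s 0) (le_max_right s 0)
    linarith [dist_triangle (ρ (max s 0)) z (ρ 0), dist_comm z (ρ 0)]
  refine ⟨_, (tendsto_atTop_ciInf hanti hbdd).congr' ?_⟩
  filter_upwards [eventually_ge_atTop 0] with s hs
  simp only [f, max_eq_left hs]

def IsBusemann (ρ : ℝ → X) (c : X → ℝ) : Prop :=
  ∀ z, Tendsto (fun s => dist (ρ s) z - s) atTop (𝓝 (c z))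

theorem IsGeodesicOn.exists_isBusemann (hρ : IsGeodesicOn ρ (Ici 0)) :
    ∃ c : C(X, ℝ), IsBusemann ρ c := by
  choose c hc using hρ.exists_tendsto_dist_sub
  have hlip : LipschitzWith 1 c := LipschitzWith.of_le_add fun z w =>
    le_of_tendsto_of_tendsto' (hc z) ((hc w).add_const _) fun s => by
      linarith [dist_triangle (ρ s) w z, dist_comm w z]
  exact ⟨⟨c, hlip.continuous⟩, hc⟩

def busemannPoint (y : X) (c : C(X, ℝ)) : C(X, ℝ) := c - ContinuousMap.const X (c y)

@[simp]
theorem busemannPoint_apply (y : X) (c : C(X, ℝ)) (z : X) :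
    busemannPoint y c z = c z - c y := rfl

@[simp]
theorem bAct_apply (y : X) (h : X ≃ᵢ X) (f : C(X, ℝ)) (z : X) :
    bAct y h f z = f (h.symm z) - f (h.symm y) := rfl

variable {c : C(X, ℝ)}

theorem IsBusemann.tendsto_busFun (hc : IsBusemann ρ c) (y : X) :
    Tendsto (fun s => busFun y (ρ s)) atTop (𝓝 (busemannPoint y c)) := by
  refine ContinuousMap.tendsto_of_equicontinuous ?_ fun z => ?_
  · refine Metric.equicontinuous_of_continuity_modulus id tendsto_id _ fun z w s => ?_
    simpa [busFun, dist_sub_right] using (LipschitzWith.dist_right (ρ s)).dist_le_mul z w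
  · refine ((hc z).sub (hc y)).congr fun s => ?_
    simp only [busFun, ContinuousMap.coe_mk]
    ring

theorem IsBusemann.apply_eq_neg (hc : IsBusemann ρ c) {t : ℝ} (hρ : IsGeodesicOn ρ (Ici t)) :
    c (ρ t) = -t := by
  refine tendsto_nhds_unique (hc (ρ t)) (tendsto_const_nhds.congr' ?_)
  filter_upwards [eventually_ge_atTop t] with s hs
  rw [hρ.dist_eq_sub (mem_Ici.2 le_rfl) hs hs]
  ring

theorem IsBusemann.busemannPoint_mem_visualBoundary (hc : IsBusemann ρ c)
    (hρ : IsGeodesicOn ρ (Ici 0)) (y : X) : busemannPoint y c ∈ visualBoundary y := by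
  refine ⟨mem_closure_of_tendsto (hc.tendsto_busFun y) (Eventually.of_forall fun _ =>
    mem_range_self _), ?_⟩
  -- `busemannPoint y c` is unbounded below along `ρ`, while `busFun y x ≥ -dist x y`.
  rintro ⟨x, hx⟩
  set t := dist x y + |c y| + 1
  have hval : busFun y x (ρ t) = -t - c y := by
    rw [hx, busemannPoint_apply, hc.apply_eq_neg (hρ.mono (Ici_subset_Ici.2 (by positivity)))]
  have hbus : busFun y x (ρ t) = dist x (ρ t) - dist x y := rfl
  linarith [dist_nonneg (x := x) (y := ρ t), neg_abs_le (c y)]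

theorem IsBusemann.apply_symm (hc : IsBusemann ρ c) {h : X ≃ᵢ X} {T : ℝ}
    (hh : ∀ s, h (ρ s) = ρ (s + T)) (z : X) : c (h.symm z) = c z + T := by
  refine tendsto_nhds_unique (hc (h.symm z)) ?_
  refine (((hc z).comp (tendsto_atTop_add_const_right atTop T tendsto_id)).add_const T).congr
    fun s => ?_
  rw [Function.comp_apply, id, ← hh, ← h.dist_eq (ρ s), h.apply_symm_apply]
  ring

theorem IsBusemann.bAct_busemannPoint (hc : IsBusemann ρ c) {h : X ≃ᵢ X} {T : ℝ}
    (hh : ∀ s, h (ρ s) = ρ (s + T)) (y : X) :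
    bAct y h (busemannPoint y c) = busemannPoint y c := by
  ext z
  simp only [bAct_apply, busemannPoint_apply, hc.apply_symm hh]
  ring

end Busemann

section Axis

variable {X : Type*} [MetricSpace X] {g : X ≃ᵢ X} {γ : ℝ → X} {τ : ℝ}

theorem IsAxis.pow_apply (hγ : IsAxis g γ τ) (k : ℕ) (t : ℝ) :
    (g ^ k) (γ t) = γ (t + k * τ) := by
  induction k generalizing t with
  | zero => simp
  | succ k ih =>
    rw [pow_succ, IsometryEquiv.coe_mul, Function.comp_apply, hγ.2.2.1, ih]
    push_cast
    ring_nf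

theorem IsAxis.pow_symm_apply (hγ : IsAxis g γ τ) (k : ℕ) (t : ℝ) :
    (g ^ k).symm (γ t) = γ (t - k * τ) :=
  (g ^ k).symm_apply_eq.2 (by rw [hγ.pow_apply]; ring_nf)

theorem BoundsFlatHalfPlane.exists_perpendicular_ray (h : BoundsFlatHalfPlane γ) :
    ∃ ρ : ℝ → X, IsGeodesicOn ρ (Ici 0) ∧
      ∀ u, Tendsto (fun s => dist (ρ s) (γ u) - s) atTop (𝓝 0) := by
  obtain ⟨F, hF, hFγ⟩ := h
  refine ⟨fun s => F (0, s), fun s hs t ht => ?_, fun u => ?_⟩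
  · rw [hF (0, s) (0, t) hs ht]
    simp [Real.sqrt_sq_eq_abs]
  · refine (tendsto_sqrt_sq_add_sq_sub_atTop u).congr' ?_
    filter_upwards [eventually_ge_atTop 0] with s hs
    rw [← hFγ u, hF (0, s) (u, 0) hs le_rfl]
    ring_nf

end Axis

section Dynamics

variable {X : Type*} [MetricSpace X] {y : X} {g : X ≃ᵢ X} {a b : C(X, ℝ)}

def IsAttractingPair (y : X) (g : X ≃ᵢ X) (a b : C(X, ℝ)) : Prop :=
  ∀ W : Set C(X, ℝ), IsOpen W → a ∈ W → b ∈ W →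
    ∀ ξ ∈ visualBoundary y, ξ ∉ W → ∃ k : ℕ, bAct y (g ^ k) ξ ∈ W

theorem NorthSouthDynamics.exists_isAttractingPair (hns : NorthSouthDynamics y g) :
    ∃ a b, IsAttractingPair y g a b := by
  obtain ⟨a, -, b, -, -, -, -, hns⟩ := hns
  refine ⟨a, b, fun W hW ha hb ξ hξ hξW => ?_⟩
  obtain ⟨k, -, hk, -⟩ := hns W (mem_nhdsWithin_of_mem_nhds (hW.mem_nhds ha))
    W (mem_nhdsWithin_of_mem_nhds (hW.mem_nhds hb))
  exact ⟨k, hk ξ hξ hξW⟩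

theorem IsAttractingPair.eq_or_eq_of_forall_bAct_pow_eq (hab : IsAttractingPair y g a b)
    {ξ : C(X, ℝ)} (hξ : ξ ∈ visualBoundary y) (hfix : ∀ k : ℕ, bAct y (g ^ k) ξ = ξ) :
    ξ = a ∨ ξ = b := by
  by_contra! hne
  obtain ⟨k, hk⟩ := hab {ξ}ᶜ isOpen_compl_singleton hne.1.symm hne.2.symm ξ hξ (by simp)
  exact hk (hfix k)

theorem IsAttractingPair.pair_eq (hab : IsAttractingPair y g a b) {ξ₁ ξ₂ : C(X, ℝ)}
    (hξ₁ : ξ₁ ∈ visualBoundary y) (hξ₂ : ξ₂ ∈ visualBoundary y)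
    (hfix₁ : ∀ k : ℕ, bAct y (g ^ k) ξ₁ = ξ₁) (hfix₂ : ∀ k : ℕ, bAct y (g ^ k) ξ₂ = ξ₂)
    (hne : ξ₁ ≠ ξ₂) : ({a, b} : Set C(X, ℝ)) = {ξ₁, ξ₂} := by
  rcases hab.eq_or_eq_of_forall_bAct_pow_eq hξ₁ hfix₁ with rfl | rfl <;>
    rcases hab.eq_or_eq_of_forall_bAct_pow_eq hξ₂ hfix₂ with rfl | rfl
  all_goals first | exact absurd rfl hne | rfl | exact pair_comm _ _

end Dynamics

theorem stmt_13_general {X : Type*} [MetricSpace X] (y : X)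
    (g : X ≃ᵢ X) (haxial : ∃ γ τ, IsAxis g γ τ)
    (hns : NorthSouthDynamics y g) :
    IsRankOne g := by
  obtain ⟨γ, τ, hγ⟩ := haxial
  refine ⟨γ, τ, hγ, fun hflat => ?_⟩
  obtain ⟨a, b, hab⟩ := hns.exists_isAttractingPair
  obtain ⟨ρ, hρ, hργ⟩ := hflat.exists_perpendicular_ray
  have hfwd : IsGeodesicOn γ (Ici 0) := hγ.1.mono (subset_univ _)
  have hbwd : IsGeodesicOn (fun s => γ (-s)) (Ici 0) := hγ.1.comp_neg_s13.mono (subset_univ _)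
  obtain ⟨ca, hca⟩ := hfwd.exists_isBusemann
  obtain ⟨cb, hcb⟩ := hbwd.exists_isBusemann
  obtain ⟨cF, hcF⟩ := hρ.exists_isBusemann
  have hcaγ (u : ℝ) : ca (γ u) = -u := hca.apply_eq_neg (hγ.1.mono (subset_univ _))
  have hcbγ (u : ℝ) : cb (γ u) = u := by
    simpa using hcb.apply_eq_neg (t := -u) (hγ.1.comp_neg_s13.mono (subset_univ _))
  have hcFγ (u : ℝ) : cF (γ u) = 0 := tendsto_nhds_unique (hcF (γ u)) (hργ u)
  let W := {f : C(X, ℝ) | f (γ 1) ≠ f (γ 0)}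
  have hW : IsOpen W := isOpen_ne_fun (continuous_eval_const _) (continuous_eval_const _)
  have hpair := hab.pair_eq (hca.busemannPoint_mem_visualBoundary hfwd y)
    (hcb.busemannPoint_mem_visualBoundary hbwd y)
    (fun k => hca.bAct_busemannPoint (hγ.pow_apply k) y)
    (fun k => hcb.bAct_busemannPoint (T := -(k * τ))
      (fun s => by rw [hγ.pow_apply]; ring_nf) y)
    (fun h => by
      have := congr($h (γ 1) - $h (γ 0))
      norm_num [hcaγ, hcbγ] at this)
  have habW : {a, b} ⊆ W := hpair ▸ pair_subset (by simp [W, hcaγ]) (by simp [W, hcbγ])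
  obtain ⟨k, hk⟩ := hab W hW (habW (mem_insert _ _)) (habW (mem_insert_of_mem _ rfl))
    _ (hcF.busemannPoint_mem_visualBoundary hρ y) (by simp [W, hcFγ])
  exact hk (by simp [hγ.pow_symm_apply, hcFγ])

/-- an axial isometry acting with north-south dynamics on the visual
boundary is rank-one. -/
theorem stmt_13 {X : Type*} [MetricSpace X] [ProperSpace X] (hX : IsCAT0 X) (y : X)
    (g : X ≃ᵢ X) (haxial : ∃ γ τ, IsAxis g γ τ)
    (hns : NorthSouthDynamics y g) :
    IsRankOne g :=
  stmt_13_general y g haxial hns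
end
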